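/- arXiv:1209.0623 — 3 statements merged into one kernel-verified Lean document; each statement's English description precedes it below -/
import Mathlib

section
/- Let f, g : ℝ³ → ℝ be C¹ and uniformly Lipschitz in the third variable, satisfying the compatibility condition ∂f/∂y + g·∂f/∂Z − ∂g/∂x − f·∂g/∂Z = 0 on ℝ³, and let z₀ ∈ ℝ. Define Z̃₀ : ℝ → ℝ as the solution of the ODE dZ̃₀/dx = f(x, 0, Z̃₀(x)) with Z̃₀(0) = z₀, and for each fixed x̄ define Z̃(x̄, ·) as the solution of dZ̃_{x̄}/dy = g(x̄, y, Z̃_{x̄}(y)) with Z̃_{x̄}(0) = Z̃₀(x̄). Then Z̃ is the unique C² solution of the system ∂Z/∂x = f(x,y,Z), ∂Z/∂y = g(x,y,Z), Z(0,0) = z₀. -/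
/-!
Differentiating the vertical ODE in the parameter `x` shows that `∂ₓZ̃(x, ·)` solves the
variational equation `φ' = ∂ₓg + ∂_Z g · φ` along the trajectory, with
`φ(0) = Z̃₀'(x) = f(x, 0, Z̃(x, 0))`. The compatibility condition says exactly that
`t ↦ f(x, t, Z̃(x, t))` solves the same linear equation, hence `∂ₓZ̃ = f(x, y, Z̃)`.
Differentiability in the parameter comes from Grönwall's inequality:
`Z̃(x', ·) - Z̃(x, ·) - (x' - x) φ` solves the linearized equation up to an error `o(x' - x)`,
uniformly on compact time intervals.
Both partial derivatives of `Z̃` are then continuous, so `Z̃` is C², and uniqueness reduces to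
uniqueness for the two Lipschitz ODEs.
-/

open Set Filter Metric Topology Asymptotics
open scoped NNReal

lemma gronwallBound_mul (s δ K ε x : ℝ) :
    gronwallBound (s * δ) K (s * ε) x = s * gronwallBound δ K ε x := by
  unfold gronwallBound
  split_ifs <;> ring

section Gronwall

variable {E : Type*} [NormedAddCommGroup E] [NormedSpace ℝ E] {v : ℝ → E → E} {K : ℝ≥0}
  {f g f' g' : ℝ → E} {δ εf εg T : ℝ}

lemma dist_le_gronwallBound_of_approx_trajectories_ODE_of_nonneg
    (hv : ∀ t, LipschitzWith K (v t))
    (hf : ∀ t, HasDerivAt f (f' t) t) (hg : ∀ t, HasDerivAt g (g' t) t)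
    (hfb : ∀ t ∈ uIcc 0 T, dist (f' t) (v t (f t)) ≤ εf)
    (hgb : ∀ t ∈ uIcc 0 T, dist (g' t) (v t (g t)) ≤ εg)
    (h0 : dist (f 0) (g 0) ≤ δ) (hT : 0 ≤ T) :
    dist (f T) (g T) ≤ gronwallBound δ K (εf + εg) T := by
  rw [uIcc_of_le hT] at hfb hgb
  simpa using dist_le_of_approx_trajectories_ODE hv
    (fun t _ => (hf t).continuousAt.continuousWithinAt) (fun t _ => (hf t).hasDerivWithinAt)
    (fun t ht => hfb t (Ico_subset_Icc_self ht))
    (fun t _ => (hg t).continuousAt.continuousWithinAt) (fun t _ => (hg t).hasDerivWithinAt)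
    (fun t ht => hgb t (Ico_subset_Icc_self ht)) h0 T ⟨hT, le_rfl⟩

lemma dist_le_gronwallBound_of_approx_trajectories_ODE (hv : ∀ t, LipschitzWith K (v t))
    (hf : ∀ t, HasDerivAt f (f' t) t) (hg : ∀ t, HasDerivAt g (g' t) t)
    (hfb : ∀ t ∈ uIcc 0 T, dist (f' t) (v t (f t)) ≤ εf)
    (hgb : ∀ t ∈ uIcc 0 T, dist (g' t) (v t (g t)) ≤ εg)
    (h0 : dist (f 0) (g 0) ≤ δ) :
    dist (f T) (g T) ≤ gronwallBound δ K (εf + εg) |T| := by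
  rcases le_total 0 T with hT | hT
  · rw [abs_of_nonneg hT]
    exact dist_le_gronwallBound_of_approx_trajectories_ODE_of_nonneg hv hf hg hfb hgb h0 hT
  have hrev : ∀ {u u' : ℝ → E}, (∀ t, HasDerivAt u (u' t) t) →
      ∀ t, HasDerivAt (fun s => u (-s)) (-u' (-t)) t := fun hu t => by
    simpa [Function.comp_def] using (hu (-t)).scomp t (hasDerivAt_neg t)
  have hmem : ∀ t ∈ uIcc 0 (-T), -t ∈ uIcc 0 T := fun t ht => by
    have := mem_image_of_mem Neg.neg ht
    rwa [image_neg_uIcc, neg_zero, neg_neg] at this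
  have := dist_le_gronwallBound_of_approx_trajectories_ODE_of_nonneg (v := fun t w => -v (-t) w)
    (fun t => (hv (-t)).neg) (hrev hf) (hrev hg)
    (fun t ht => by simpa only [dist_neg_neg] using hfb (-t) (hmem t ht))
    (fun t ht => by simpa only [dist_neg_neg] using hgb (-t) (hmem t ht))
    (by simpa using h0) (neg_nonneg.2 hT)
  simpa [abs_of_nonpos hT] using this

end Gronwall

lemma ContDiff.exists_pos_forall_norm_sub_sub_fderiv_le {E F : Type*} [NormedAddCommGroup E]
    [NormedSpace ℝ E] [ProperSpace E] [NormedAddCommGroup F] [NormedSpace ℝ F] {V : E → F}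
    (hV : ContDiff ℝ 1 V) {S : Set E} (hS : IsCompact S) {ε : ℝ} (hε : 0 < ε) :
    ∃ δ > 0, ∀ p ∈ S, ∀ q, ‖q - p‖ ≤ δ →
      ‖V q - V p - fderiv ℝ V p (q - p)‖ ≤ ε * ‖q - p‖ := by
  obtain ⟨δ, hδ, hδε⟩ := Metric.uniformContinuousOn_iff_le.1
    ((hS.cthickening (r := 1)).uniformContinuousOn_of_continuous
      (hV.continuous_fderiv one_ne_zero).continuousOn) ε hε
  refine ⟨min δ 1, by positivity, fun p hp q hq => ?_⟩
  have hball : closedBall p (min δ 1) ⊆ cthickening 1 S :=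
    (closedBall_subset_cthickening hp _).trans (cthickening_mono (min_le_right _ _) _)
  refine Convex.norm_image_sub_le_of_norm_hasFDerivWithin_le'
    (fun r _ => (hV.differentiable one_ne_zero r).hasFDerivAt.hasFDerivWithinAt) (fun r hr => ?_)
    (convex_closedBall p _) (mem_closedBall_self (by positivity))
    (mem_closedBall_iff_norm.2 hq)
  rw [← dist_eq_norm]
  exact hδε r (hball hr) p (hball (mem_closedBall_self (by positivity)))
    ((mem_closedBall.1 hr).trans (min_le_left _ _))

def uncurry₃ (v : ℝ → ℝ → ℝ → ℝ) : ℝ × ℝ × ℝ → ℝ := fun p => v p.1 p.2.1 p.2.2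

lemma ContinuousLinearMap.apply_triple (L : ℝ × ℝ × ℝ →L[ℝ] ℝ) (a b c : ℝ) :
    L (a, b, c) = a * L (1, 0, 0) + b * L (0, 1, 0) + c * L (0, 0, 1) := by
  have : ((a, b, c) : ℝ × ℝ × ℝ) = a • (1, 0, 0) + b • (0, 1, 0) + c • (0, 0, 1) := by simp
  rw [this, map_add, map_add, map_smul, map_smul, map_smul, smul_eq_mul, smul_eq_mul, smul_eq_mul]

section Partials

variable {v : ℝ → ℝ → ℝ → ℝ} {x y z : ℝ}

lemma hasDerivAt_partial_fst (hv : DifferentiableAt ℝ (uncurry₃ v) (x, y, z)) :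
    HasDerivAt (fun u => v u y z) (fderiv ℝ (uncurry₃ v) (x, y, z) (1, 0, 0)) x :=
  (hv.hasFDerivAt.comp_hasDerivAt x
    ((hasDerivAt_id x).prodMk ((hasDerivAt_const x y).prodMk (hasDerivAt_const x z))) :)

lemma hasDerivAt_partial_snd (hv : DifferentiableAt ℝ (uncurry₃ v) (x, y, z)) :
    HasDerivAt (fun u => v x u z) (fderiv ℝ (uncurry₃ v) (x, y, z) (0, 1, 0)) y :=
  (hv.hasFDerivAt.comp_hasDerivAt y
    ((hasDerivAt_const y x).prodMk ((hasDerivAt_id y).prodMk (hasDerivAt_const y z))) :)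

lemma hasDerivAt_partial_thd (hv : DifferentiableAt ℝ (uncurry₃ v) (x, y, z)) :
    HasDerivAt (fun u => v x y u) (fderiv ℝ (uncurry₃ v) (x, y, z) (0, 0, 1)) z :=
  (hv.hasFDerivAt.comp_hasDerivAt z
    ((hasDerivAt_const z x).prodMk ((hasDerivAt_const z y).prodMk (hasDerivAt_id z))) :)

end Partials

section ParametrizedODE

variable {v : ℝ → ℝ → ℝ → ℝ} {K : ℝ≥0} {Z : ℝ → ℝ → ℝ} {x : ℝ}

lemma exists_eventually_abs_sub_le_of_param (hv : ContDiff ℝ 1 (uncurry₃ v))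
    (hK : ∀ x t, LipschitzWith K (v x t)) (hZ : ∀ x t, HasDerivAt (Z x) (v x t (Z x t)) t)
    (h0 : DifferentiableAt ℝ (fun u => Z u 0) x) (Y : ℝ) :
    ∃ C, ∀ᶠ x' in 𝓝 x, ∀ t ∈ Icc (-Y) Y, |Z x' t - Z x t| ≤ C * |x' - x| := by
  obtain ⟨L₀, hL₀, hL₀'⟩ := h0.hasDerivAt.isBigO_sub.exists_pos
  have hZx : Continuous (Z x) := continuous_iff_continuousAt.2 fun t => (hZ x t).continuousAt
  obtain ⟨L, hL⟩ := hv.locallyLipschitz.locallyLipschitzOn.exists_lipschitzOnWith_of_compact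
    ((isCompact_closedBall x 1).prod (isCompact_Icc.image (continuous_id.prodMk hZx)))
  refine ⟨gronwallBound L₀ K L Y, ?_⟩
  filter_upwards [hL₀'.bound, closedBall_mem_nhds x one_pos] with x' h0' hx' t ht
  have hvx : ∀ s ∈ Icc (-Y) Y, dist (v x s (Z x s)) (v x' s (Z x s)) ≤ L * |x' - x| := by
    intro s hs
    have := hL.dist_le_mul (x', s, Z x s) ⟨hx', mem_image_of_mem _ hs⟩ (x, s, Z x s)
      ⟨mem_closedBall_self zero_le_one, mem_image_of_mem _ hs⟩
    rw [dist_comm]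
    simpa [uncurry₃, Prod.dist_eq, Real.dist_eq] using this
  have hsub : uIcc 0 t ⊆ Icc (-Y) Y :=
    uIcc_subset_Icc ⟨by linarith [ht.1, ht.2], by linarith [ht.1, ht.2]⟩ ht
  have := dist_le_gronwallBound_of_approx_trajectories_ODE (hK x') (hZ x') (hZ x) (εf := 0)
    (fun s _ => by simp) (fun s hs => hvx s (hsub hs)) (δ := L₀ * |x' - x|)
    (by simpa [Real.dist_eq] using h0')
  calc |Z x' t - Z x t| ≤ gronwallBound (L₀ * |x' - x|) K (0 + L * |x' - x|) |t| := this
    _ = |x' - x| * gronwallBound L₀ K L |t| := by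
      rw [zero_add, mul_comm L₀, mul_comm (L : ℝ), gronwallBound_mul]
    _ ≤ |x' - x| * gronwallBound L₀ K L Y := by
      gcongr
      exact gronwallBound_mono hL₀.le L.coe_nonneg K.coe_nonneg (abs_le.2 ht)
    _ = gronwallBound L₀ K L Y * |x' - x| := mul_comm _ _

lemma continuousAt_uncurry_of_param (hv : ContDiff ℝ 1 (uncurry₃ v))
    (hK : ∀ x t, LipschitzWith K (v x t)) (hZ : ∀ x t, HasDerivAt (Z x) (v x t (Z x t)) t)
    (h0 : DifferentiableAt ℝ (fun u => Z u 0) x) (y : ℝ) :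
    ContinuousAt (Function.uncurry Z) (x, y) := by
  obtain ⟨C, hC⟩ := exists_eventually_abs_sub_le_of_param hv hK hZ h0 (|y| + 1)
  have hy : Icc (-(|y| + 1)) (|y| + 1) ∈ 𝓝 y :=
    Icc_mem_nhds (by linarith [neg_abs_le y]) (by linarith [le_abs_self y])
  have hslice : Tendsto (fun p : ℝ × ℝ => Z x p.2) (𝓝 (x, y)) (𝓝 (Z x y)) :=
    (hZ x y).continuousAt.tendsto.comp continuousAt_snd
  have hbound : Tendsto (fun p : ℝ × ℝ => C * |p.1 - x|) (𝓝 (x, y)) (𝓝 0) := by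
    have : Continuous fun p : ℝ × ℝ => C * |p.1 - x| := by fun_prop
    simpa using this.tendsto (x, y)
  have hdiff : Tendsto (fun p : ℝ × ℝ => Z p.1 p.2 - Z x p.2) (𝓝 (x, y)) (𝓝 0) := by
    refine squeeze_zero_norm' ?_ hbound
    filter_upwards [(continuous_fst.tendsto (x, y)).eventually hC,
      (continuous_snd.tendsto (x, y)).eventually hy] with p hp hp'
    exact hp p.2 hp'
  have := hdiff.add hslice
  simp only [sub_add_cancel, zero_add] at this
  exact this

lemma eventually_abs_sub_sub_fderiv_le_of_param (hv : ContDiff ℝ 1 (uncurry₃ v))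
    (hK : ∀ x t, LipschitzWith K (v x t)) (hZ : ∀ x t, HasDerivAt (Z x) (v x t (Z x t)) t)
    (h0 : DifferentiableAt ℝ (fun u => Z u 0) x) (Y : ℝ) {c : ℝ} (hc : 0 < c) :
    ∀ᶠ x' in 𝓝 x, ∀ t ∈ Icc (-Y) Y,
      |v x' t (Z x' t) - v x t (Z x t)
        - fderiv ℝ (uncurry₃ v) (x, t, Z x t) (x' - x, 0, Z x' t - Z x t)| ≤ c * |x' - x| := by
  obtain ⟨C, hC⟩ := exists_eventually_abs_sub_le_of_param hv hK hZ h0 Y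
  have hZx : Continuous (Z x) := continuous_iff_continuousAt.2 fun t => (hZ x t).continuousAt
  obtain ⟨δ, hδ, hTaylor⟩ := hv.exists_pos_forall_norm_sub_sub_fderiv_le
    (isCompact_Icc.image (by fun_prop : Continuous fun t => (x, t, Z x t)))
    (div_pos hc (by positivity : (0 : ℝ) < 1 + |C|))
  have hnear : ∀ᶠ x' in 𝓝 x, (1 + |C|) * |x' - x| ≤ δ := by
    have : Tendsto (fun x' => (1 + |C|) * |x' - x|) (𝓝 x) (𝓝 0) := by
      have : Continuous fun x' => (1 + |C|) * |x' - x| := by fun_prop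
      simpa using this.tendsto x
    exact this.eventually (ge_mem_nhds hδ)
  filter_upwards [hC, hnear] with x' hC' hnear' t ht
  have hdist : ‖((x', t, Z x' t) : ℝ × ℝ × ℝ) - (x, t, Z x t)‖ ≤ (1 + |C|) * |x' - x| := by
    have := hC' t ht
    simp only [Prod.norm_def, Prod.fst_sub, Prod.snd_sub, sub_self, norm_zero, Real.norm_eq_abs]
    refine max_le (by nlinarith [abs_nonneg (x' - x), abs_nonneg C]) (max_le (by positivity) ?_)
    nlinarith [abs_nonneg (x' - x), le_abs_self C]
  have := hTaylor _ (mem_image_of_mem _ ht) _ (hdist.trans hnear')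
  calc _ = ‖uncurry₃ v (x', t, Z x' t) - uncurry₃ v (x, t, Z x t)
          - fderiv ℝ (uncurry₃ v) (x, t, Z x t) ((x', t, Z x' t) - (x, t, Z x t))‖ := by
        simp [uncurry₃, Real.norm_eq_abs]
    _ ≤ c / (1 + |C|) * ((1 + |C|) * |x' - x|) := this.trans (by gcongr)
    _ = c * |x' - x| := by field_simp

theorem hasDerivAt_param_of_variational (hv : ContDiff ℝ 1 (uncurry₃ v))
    (hK : ∀ x t, LipschitzWith K (v x t)) (hZ : ∀ x t, HasDerivAt (Z x) (v x t (Z x t)) t)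
    {d₀ : ℝ} (h0 : HasDerivAt (fun u => Z u 0) d₀ x) {φ : ℝ → ℝ}
    (hφ : ∀ t, HasDerivAt φ (fderiv ℝ (uncurry₃ v) (x, t, Z x t) (1, 0, 0)
      + fderiv ℝ (uncurry₃ v) (x, t, Z x t) (0, 0, 1) * φ t) t)
    (hφ0 : φ 0 = d₀) (y : ℝ) :
    HasDerivAt (fun u => Z u y) (φ y) x := by
  set a : ℝ → ℝ := fun t => fderiv ℝ (uncurry₃ v) (x, t, Z x t) (1, 0, 0)
  set b : ℝ → ℝ := fun t => fderiv ℝ (uncurry₃ v) (x, t, Z x t) (0, 0, 1)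
  have hb : ∀ t, LipschitzWith K (fun w => b t * w) := fun t => by
    have hbK : ‖b t‖ ≤ K :=
      (hasDerivAt_partial_thd (hv.differentiable one_ne_zero _)).le_of_lipschitz (hK x t)
    exact (lipschitzWith_smul (b t)).weaken (by exact_mod_cast hbK)
  set A := gronwallBound 1 K 1 |y|
  rw [hasDerivAt_iff_isLittleO]
  refine IsLittleO.trans_isBigO (g := fun x' => A * (x' - x)) (isLittleO_iff.2 fun c hc => ?_)
    ((isBigO_refl _ _).const_mul_left A)
  have hy : uIcc 0 y ⊆ Icc (-|y|) |y| :=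
    uIcc_subset_Icc ⟨by simp, abs_nonneg y⟩ ⟨neg_abs_le y, le_abs_self y⟩
  filter_upwards [eventually_abs_sub_sub_fderiv_le_of_param hv hK hZ h0.differentiableAt |y| hc,
    isLittleO_iff.1 (hasDerivAt_iff_isLittleO.1 h0) hc] with x' hrem h0'
  have hD : ∀ t, HasDerivAt (fun t => Z x' t - Z x t - (x' - x) * φ t)
      (v x' t (Z x' t) - v x t (Z x t) - (x' - x) * (a t + b t * φ t)) t := fun t =>
    ((hZ x' t).sub (hZ x t)).sub ((hφ t).const_mul _)
  have hDb : ∀ t ∈ uIcc 0 y,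
      dist (v x' t (Z x' t) - v x t (Z x t) - (x' - x) * (a t + b t * φ t))
        (b t * (Z x' t - Z x t - (x' - x) * φ t)) ≤ c * |x' - x| := fun t ht => by
    have := hrem t (hy ht)
    rw [ContinuousLinearMap.apply_triple] at this
    rw [Real.dist_eq]
    convert this using 2
    ring
  have := dist_le_gronwallBound_of_approx_trajectories_ODE hb hD (fun t => hasDerivAt_const t 0)
    hDb (εg := 0) (fun t _ => by simp) (δ := c * |x' - x|) (by simpa [hφ0] using h0')
  rw [add_zero, ← mul_one (c * |x' - x|), gronwallBound_mul] at this
  calc ‖Z x' y - Z x y - (x' - x) • φ y‖ = dist (Z x' y - Z x y - (x' - x) * φ y) 0 := by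
        simp
    _ ≤ c * |x' - x| * A := this
    _ ≤ c * |x' - x| * |A| := by gcongr; exact le_abs_self A
    _ = c * ‖A * (x' - x)‖ := by rw [norm_mul, Real.norm_eq_abs, Real.norm_eq_abs]; ring

end ParametrizedODE

lemma hasDerivAt_comp_of_compat {f g : ℝ → ℝ → ℝ → ℝ} (hf : Differentiable ℝ (uncurry₃ f))
    (hg : Differentiable ℝ (uncurry₃ g))
    (hcompat : ∀ x y z,
      deriv (fun v => f x v z) y + g x y z * deriv (fun w => f x y w) z
        - deriv (fun u => g u y z) x - f x y z * deriv (fun w => g x y w) z = 0)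
    {x t : ℝ} {ζ : ℝ → ℝ} (hζ : HasDerivAt ζ (g x t (ζ t)) t) :
    HasDerivAt (fun s => f x s (ζ s)) (fderiv ℝ (uncurry₃ g) (x, t, ζ t) (1, 0, 0)
      + fderiv ℝ (uncurry₃ g) (x, t, ζ t) (0, 0, 1) * f x t (ζ t)) t := by
  have hchain : HasDerivAt (fun s => f x s (ζ s))
      (fderiv ℝ (uncurry₃ f) (x, t, ζ t) (0, 1, g x t (ζ t))) t :=
    ((hf _).hasFDerivAt.comp_hasDerivAt t
      ((hasDerivAt_const t x).prodMk ((hasDerivAt_id t).prodMk hζ)) :)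
  convert hchain using 1
  have := hcompat x t (ζ t)
  rw [(hasDerivAt_partial_snd (hf _)).deriv, (hasDerivAt_partial_thd (hf _)).deriv,
    (hasDerivAt_partial_fst (hg _)).deriv, (hasDerivAt_partial_thd (hg _)).deriv] at this
  rw [(fderiv ℝ (uncurry₃ f) (x, t, ζ t)).apply_triple 0 1,
    (fderiv ℝ (uncurry₃ g) (x, t, ζ t)).apply_triple 1 0]
  linarith

lemma hasFDerivAt_uncurry_of_partials {P Q : ℝ → ℝ → ℝ → ℝ} {Z : ℝ → ℝ → ℝ}
    (hP : Continuous (uncurry₃ P)) (hQ : Continuous (uncurry₃ Q))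
    (hZ : Continuous (Function.uncurry Z))
    (hx : ∀ x y, HasDerivAt (fun u => Z u y) (P x y (Z x y)) x)
    (hy : ∀ x y, HasDerivAt (Z x) (Q x y (Z x y)) y) (p : ℝ × ℝ) :
    HasFDerivAt (Function.uncurry Z) (P p.1 p.2 (Z p.1 p.2) • ContinuousLinearMap.fst ℝ ℝ ℝ
      + Q p.1 p.2 (Z p.1 p.2) • ContinuousLinearMap.snd ℝ ℝ ℝ) p := by
  have hγ : Continuous fun q : ℝ × ℝ => (q.1, q.2, Z q.1 q.2) := by fun_prop
  have hspan : ∀ {h : ℝ × ℝ → ℝ}, Continuous h →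
      Continuous fun q => ContinuousLinearMap.toSpanSingleton ℝ (h q) := fun hh =>
    ContinuousLinearMap.toSpanSingletonCLE.continuous.comp hh
  have := hasStrictFDerivAt_uncurry_coprod (u := p) (f := Z)
    (f₁ := fun x y => ContinuousLinearMap.toSpanSingleton ℝ (P x y (Z x y)))
    (f₂ := fun x y => ContinuousLinearMap.toSpanSingleton ℝ (Q x y (Z x y)))
    (Eventually.of_forall fun q => (hx q.1 q.2).hasFDerivAt)
    (Eventually.of_forall fun q => (hy q.1 q.2).hasFDerivAt)
    (hspan (hP.comp hγ)).continuousAt (hspan (hQ.comp hγ)).continuousAt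
  exact this.hasFDerivAt.congr_fderiv (by ext <;> simp [Function.HasUncurry.uncurry])

lemma contDiff_uncurry_succ_of_partials {P Q : ℝ → ℝ → ℝ → ℝ} {Z : ℝ → ℝ → ℝ} {n : ℕ}
    (hP : ContDiff ℝ n (uncurry₃ P)) (hQ : ContDiff ℝ n (uncurry₃ Q))
    (hZ : ContDiff ℝ n (Function.uncurry Z))
    (hx : ∀ x y, HasDerivAt (fun u => Z u y) (P x y (Z x y)) x)
    (hy : ∀ x y, HasDerivAt (Z x) (Q x y (Z x y)) y) :
    ContDiff ℝ (n + 1) (Function.uncurry Z) := by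
  have hD := hasFDerivAt_uncurry_of_partials hP.continuous hQ.continuous hZ.continuous hx hy
  have hγ : ContDiff ℝ n fun q : ℝ × ℝ => (q.1, q.2, Z q.1 q.2) :=
    contDiff_fst.prodMk (contDiff_snd.prodMk hZ)
  refine contDiff_succ_iff_fderiv.2 ⟨fun p => (hD p).differentiableAt, by simp, ?_⟩
  rw [funext fun p => (hD p).fderiv]
  exact ((hP.comp hγ).smul contDiff_const).add ((hQ.comp hγ).smul contDiff_const)

theorem contDiff_uncurry_of_partials {P Q : ℝ → ℝ → ℝ → ℝ} {Z : ℝ → ℝ → ℝ}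
    (hZ : Continuous (Function.uncurry Z))
    (hx : ∀ x y, HasDerivAt (fun u => Z u y) (P x y (Z x y)) x)
    (hy : ∀ x y, HasDerivAt (Z x) (Q x y (Z x y)) y) :
    ∀ n : ℕ, ContDiff ℝ n (uncurry₃ P) → ContDiff ℝ n (uncurry₃ Q) →
      ContDiff ℝ (n + 1) (Function.uncurry Z)
  | 0, hP, hQ => contDiff_uncurry_succ_of_partials hP hQ (contDiff_zero.2 hZ) hx hy
  | n + 1, hP, hQ => contDiff_uncurry_succ_of_partials hP hQ
      (by exact_mod_cast contDiff_uncurry_of_partials hZ hx hy n hP.of_succ hQ.of_succ) hx hy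

theorem eq_of_hasDerivAt_partials {f g : ℝ → ℝ → ℝ → ℝ} {Kf Kg : ℝ≥0}
    (hf : ∀ x, LipschitzWith Kf (f x 0)) (hg : ∀ x y, LipschitzWith Kg (g x y))
    {W Z : ℝ → ℝ → ℝ}
    (hWx : ∀ x, HasDerivAt (fun u => W u 0) (f x 0 (W x 0)) x)
    (hZx : ∀ x, HasDerivAt (fun u => Z u 0) (f x 0 (Z x 0)) x)
    (hWy : ∀ x y, HasDerivAt (W x) (g x y (W x y)) y)
    (hZy : ∀ x y, HasDerivAt (Z x) (g x y (Z x y)) y) (h00 : W 0 0 = Z 0 0) : W = Z := by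
  have h0 : (fun u => W u 0) = fun u => Z u 0 :=
    ODE_solution_unique_univ (s := fun _ => univ) (fun x => (hf x).lipschitzOnWith)
      (fun x => ⟨hWx x, trivial⟩) (fun x => ⟨hZx x, trivial⟩) h00
  funext x
  exact ODE_solution_unique_univ (s := fun _ => univ) (fun y => (hg x y).lipschitzOnWith)
    (fun y => ⟨hWy x y, trivial⟩) (fun y => ⟨hZy x y, trivial⟩) (congrFun h0 x)

/-- The solution of the compatible system of two first-order PDEs may be constructed
by integrating two successive ODEs: first `dZ̃₀/dx = f(x,0,Z̃₀)` along the x-axis with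
`Z̃₀(0) = z₀`, then for each fixed `xb`, `dZ̃_{xb}/dy = g(xb,y,Z̃_{xb})` with
`Z̃_{xb}(0) = Z̃₀(xb)`.  The resulting function `Z̃` is the unique C² solution of the
system `∂Z/∂x = f(x,y,Z)`, `∂Z/∂y = g(x,y,Z)`, `Z(0,0) = z₀`. -/
theorem solution_by_successive_ODEs
    (f g : ℝ → ℝ → ℝ → ℝ) (z₀ : ℝ)
    (hf : ContDiff ℝ 1 (fun p : ℝ × ℝ × ℝ => f p.1 p.2.1 p.2.2))
    (hg : ContDiff ℝ 1 (fun p : ℝ × ℝ × ℝ => g p.1 p.2.1 p.2.2))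
    (hfLip : ∃ K : NNReal, ∀ x y, LipschitzWith K (fun z => f x y z))
    (hgLip : ∃ K : NNReal, ∀ x y, LipschitzWith K (fun z => g x y z))
    (hcompat : ∀ x y z,
      deriv (fun v => f x v z) y + g x y z * deriv (fun w => f x y w) z
        - deriv (fun u => g u y z) x - f x y z * deriv (fun w => g x y w) z = 0)
    (Z₀ : ℝ → ℝ) (Ztilde : ℝ → ℝ → ℝ)
    (hZ₀ : ∀ x, HasDerivAt Z₀ (f x 0 (Z₀ x)) x)
    (hZ₀0 : Z₀ 0 = z₀)
    (hvert : ∀ xb y, HasDerivAt (fun v => Ztilde xb v) (g xb y (Ztilde xb y)) y)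
    (hvert0 : ∀ xb, Ztilde xb 0 = Z₀ xb) :
    (ContDiff ℝ 2 (fun p : ℝ × ℝ => Ztilde p.1 p.2)
      ∧ (∀ x y, deriv (fun u => Ztilde u y) x = f x y (Ztilde x y))
      ∧ (∀ x y, deriv (fun v => Ztilde x v) y = g x y (Ztilde x y))
      ∧ Ztilde 0 0 = z₀)
    ∧ ∀ W : ℝ → ℝ → ℝ,
        ContDiff ℝ 2 (fun p : ℝ × ℝ => W p.1 p.2) →
        (∀ x y, deriv (fun u => W u y) x = f x y (W x y)) →
        (∀ x y, deriv (fun v => W x v) y = g x y (W x y)) →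
        W 0 0 = z₀ → W = Ztilde := by
  obtain ⟨Kf, hKf⟩ := hfLip
  obtain ⟨Kg, hKg⟩ := hgLip
  have hZx : ∀ x, HasDerivAt (fun u => Ztilde u 0) (f x 0 (Ztilde x 0)) x := by
    simpa only [hvert0] using hZ₀
  have hhor : ∀ x y, HasDerivAt (fun u => Ztilde u y) (f x y (Ztilde x y)) x := fun x y =>
    hasDerivAt_param_of_variational hg hKg hvert (hZx x) (fun t => hasDerivAt_comp_of_compat
      (hf.differentiable one_ne_zero) (hg.differentiable one_ne_zero) hcompat (hvert x t)) rfl y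
  have hcont : Continuous (Function.uncurry Ztilde) := continuous_iff_continuousAt.2 fun p =>
    continuousAt_uncurry_of_param hg hKg hvert (hZx p.1).differentiableAt p.2
  refine ⟨⟨?_, fun x y => (hhor x y).deriv, fun x y => (hvert x y).deriv,
    (hvert0 0).trans hZ₀0⟩, fun W hW hWx hWy hW00 => ?_⟩
  · exact_mod_cast contDiff_uncurry_of_partials hcont hhor hvert 1 hf hg
  have hWd : Differentiable ℝ (Function.uncurry W) := hW.differentiable two_ne_zero
  refine eq_of_hasDerivAt_partials (fun x => hKf x 0) hKg (fun x => ?_) hZx (fun x y => ?_) hvert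
    (hW00.trans ((hvert0 0).trans hZ₀0).symm)
  · rw [← hWx x 0]
    exact ((hWd (x, 0)).comp x
      (differentiableAt_id.prodMk (differentiableAt_const (0 : ℝ)))).hasDerivAt
  · rw [← hWy x y]
    exact ((hWd (x, y)).comp y ((differentiableAt_const x).prodMk differentiableAt_id)).hasDerivAt
end

section
/- Let μ : [0,T]×ℝ → ℝ be C¹ and σ : [0,T]×ℝ → ℝ∖{0} be C², let F, G : [0,T] → ℝ be C¹ with G nowhere zero, and define f(t,x,Z) = μ(t,Z) − (1/2)σ(t,Z)·∂σ/∂Z(t,Z) − (F(t)/G(t))·σ(t,Z) and g(t,x,Z) = σ(t,Z)/G(t). If the integration condition ∂μ/∂Z − (μ/σ)·∂σ/∂Z − (1/σ)·∂σ/∂t − (σ/2)·∂²σ/∂Z² = −G′(t)/G(t) holds for all (t,Z), then f and g satisfy the compatibility condition ∂f/∂x + g·∂f/∂Z − ∂g/∂t − f·∂g/∂Z = 0 on [0,T]×ℝ×ℝ. -/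
/-!
Since `f` does not depend on `x` and both `f` and `g` are explicit in `σ`, `μ`, `F`, `G`, the
compatibility expression can be computed by the product and quotient rules. The terms in `F` and
in `(∂σ/∂Z)²` cancel, leaving `(σ/G)·(∂μ/∂Z − (μ/σ)∂σ/∂Z − (1/σ)∂σ/∂t − (σ/2)∂²σ/∂Z² + G′/G)`,
which vanishes by the integration condition.
-/

section PartialDerivatives

variable {𝕜 : Type*} [NontriviallyNormedField 𝕜] {E : Type*} [NormedAddCommGroup E]
  [NormedSpace 𝕜 E] {φ : 𝕜 → 𝕜 → E}

theorem differentiableAt_left_of_uncurry {t z : 𝕜}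
    (h : DifferentiableAt 𝕜 (fun p : 𝕜 × 𝕜 => φ p.1 p.2) (t, z)) :
    DifferentiableAt 𝕜 (fun s => φ s z) t :=
  h.comp (f := fun s => (s, z)) t (differentiableAt_id.prodMk (differentiableAt_const z))

theorem differentiableAt_right_of_uncurry {t z : 𝕜}
    (h : DifferentiableAt 𝕜 (fun p : 𝕜 × 𝕜 => φ p.1 p.2) (t, z)) :
    DifferentiableAt 𝕜 (fun w => φ t w) z :=
  h.comp z ((differentiableAt_const t).prodMk differentiableAt_id)

theorem deriv_right_eq_fderiv_uncurry {t z : 𝕜}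
    (h : DifferentiableAt 𝕜 (fun p : 𝕜 × 𝕜 => φ p.1 p.2) (t, z)) :
    deriv (fun w => φ t w) z = fderiv 𝕜 (fun p : 𝕜 × 𝕜 => φ p.1 p.2) (t, z) (0, 1) := by
  have hcurve : HasDerivAt (fun w : 𝕜 => (t, w)) ((0 : 𝕜), (1 : 𝕜)) z :=
    (hasDerivAt_const z t).prodMk (hasDerivAt_id z)
  exact (h.hasFDerivAt.comp_hasDerivAt z hcurve).deriv

theorem ContDiff.deriv_right_uncurry {n : WithTop ℕ∞}
    (h : ContDiff 𝕜 (n + 1) (fun p : 𝕜 × 𝕜 => φ p.1 p.2)) :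
    ContDiff 𝕜 n (fun p : 𝕜 × 𝕜 => deriv (fun w => φ p.1 w) p.2) := by
  have hd : Differentiable 𝕜 (fun p : 𝕜 × 𝕜 => φ p.1 p.2) := h.differentiable (by simp)
  have heq : (fun p : 𝕜 × 𝕜 => deriv (fun w => φ p.1 w) p.2)
      = fun p => fderiv 𝕜 (fun p : 𝕜 × 𝕜 => φ p.1 p.2) p (0, 1) :=
    funext fun p => deriv_right_eq_fderiv_uncurry (hd p)
  rw [heq]
  exact (h.fderiv_right le_rfl).clm_apply contDiff_const

end PartialDerivatives

theorem compatibility_expr_eq_mul_condition {μ μZ σ σZ σZZ σt F G G' : ℝ} (hσ : σ ≠ 0) (hG : G ≠ 0) :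
    σ / G * (μZ - (1 / 2 * σZ * σZ + 1 / 2 * σ * σZZ) - F / G * σZ)
      - (σt * G - σ * G') / G ^ 2
      - (μ - 1 / 2 * σ * σZ - F / G * σ) * (σZ / G)
    = σ / G * (μZ - μ / σ * σZ - 1 / σ * σt - σ / 2 * σZZ + G' / G) := by
  field_simp
  ring

theorem compatibility_of_induced_system_general
    (T : ℝ)
    (μ σ : ℝ → ℝ → ℝ) (F G : ℝ → ℝ) (f g : ℝ → ℝ → ℝ → ℝ)
    (hμ : ContDiff ℝ 1 (fun p : ℝ × ℝ => μ p.1 p.2))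
    (hσ : ContDiff ℝ 2 (fun p : ℝ × ℝ => σ p.1 p.2))
    (hσne : ∀ t Z, σ t Z ≠ 0)
    (hG : ContDiff ℝ 1 G) (hGne : ∀ t, G t ≠ 0)
    (hfdef : ∀ t x Z, f t x Z
      = μ t Z - (1/2) * σ t Z * deriv (fun w => σ t w) Z - (F t / G t) * σ t Z)
    (hgdef : ∀ t x Z, g t x Z = σ t Z / G t)
    (hcond : ∀ t ∈ Set.Icc 0 T, ∀ Z : ℝ,
      deriv (fun w => μ t w) Z
        - (μ t Z / σ t Z) * deriv (fun w => σ t w) Z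
        - (1 / σ t Z) * deriv (fun s => σ s Z) t
        - (σ t Z / 2) * deriv (fun w => deriv (fun w' => σ t w') w) Z
      = - deriv G t / G t) :
    ∀ t ∈ Set.Icc 0 T, ∀ x Z : ℝ,
      deriv (fun u => f t u Z) x
        + g t x Z * deriv (fun w => f t x w) Z
        - deriv (fun s => g s x Z) t
        - f t x Z * deriv (fun w => g t x w) Z = 0 := by
  intro t ht x Z
  have hσd : Differentiable ℝ (fun p : ℝ × ℝ => σ p.1 p.2) := hσ.differentiable two_ne_zero
  have hσZd : Differentiable ℝ (fun p : ℝ × ℝ => deriv (fun w => σ p.1 w) p.2) :=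
    (hσ.deriv_right_uncurry (n := 1)).differentiable one_ne_zero
  have hσZ : ∀ w, HasDerivAt (fun w => σ t w) (deriv (fun w => σ t w) w) w := fun w =>
    (differentiableAt_right_of_uncurry (hσd (t, w))).hasDerivAt
  have hσZZ := (differentiableAt_right_of_uncurry
    (φ := fun s w => deriv (fun w' => σ s w') w) (hσZd (t, Z))).hasDerivAt
  have hμZ := (differentiableAt_right_of_uncurry
    ((hμ.differentiable one_ne_zero) (t, Z))).hasDerivAt
  have hσt := (differentiableAt_left_of_uncurry (hσd (t, Z))).hasDerivAt
  have hf_x : deriv (fun u => f t u Z) x = 0 := by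
    simp only [hfdef]
    exact deriv_const _ _
  have hf_Z : deriv (fun w => f t x w) Z
      = deriv (fun w => μ t w) Z
        - (1 / 2 * deriv (fun w => σ t w) Z * deriv (fun w => σ t w) Z
          + 1 / 2 * σ t Z * deriv (fun w => deriv (fun w' => σ t w') w) Z)
        - F t / G t * deriv (fun w => σ t w) Z := by
    simp only [hfdef]
    exact ((hμZ.sub (((hσZ Z).const_mul (1 / 2)).mul hσZZ)).sub
      ((hσZ Z).const_mul (F t / G t))).deriv
  have hg_t : deriv (fun s => g s x Z) t
      = (deriv (fun s => σ s Z) t * G t - σ t Z * deriv G t) / G t ^ 2 := by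
    simp only [hgdef]
    exact (hσt.div ((hG.differentiable one_ne_zero) t).hasDerivAt (hGne t)).deriv
  have hg_Z : deriv (fun w => g t x w) Z = deriv (fun w => σ t w) Z / G t := by
    simp only [hgdef]
    exact ((hσZ Z).div_const (G t)).deriv
  rw [hf_x, zero_add, hf_Z, hg_t, hg_Z, hfdef, hgdef, compatibility_expr_eq_mul_condition (hσne t Z) (hGne t),
    hcond t ht Z]
  ring

/-- If `f(t,x,Z) = μ(t,Z) − ½σ(t,Z)∂σ/∂Z(t,Z) − (F(t)/G(t))σ(t,Z)` and
`g(t,x,Z) = σ(t,Z)/G(t)`, and the integration condition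
`∂μ/∂Z − (μ/σ)∂σ/∂Z − (1/σ)∂σ/∂t − (σ/2)∂²σ/∂Z² = −G′/G` holds, then `f` and `g`
satisfy the Frobenius compatibility condition `∂f/∂x + g∂f/∂Z − ∂g/∂t − f∂g/∂Z = 0`
on `[0,T]×ℝ×ℝ`. -/
theorem compatibility_of_induced_system
    (T : ℝ) (hT : 0 < T)
    (μ σ : ℝ → ℝ → ℝ) (F G : ℝ → ℝ) (f g : ℝ → ℝ → ℝ → ℝ)
    (hμ : ContDiff ℝ 1 (fun p : ℝ × ℝ => μ p.1 p.2))
    (hσ : ContDiff ℝ 2 (fun p : ℝ × ℝ => σ p.1 p.2))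
    (hσne : ∀ t Z, σ t Z ≠ 0)
    (hF : ContDiff ℝ 1 F) (hG : ContDiff ℝ 1 G) (hGne : ∀ t, G t ≠ 0)
    (hfdef : ∀ t x Z, f t x Z
      = μ t Z - (1/2) * σ t Z * deriv (fun w => σ t w) Z - (F t / G t) * σ t Z)
    (hgdef : ∀ t x Z, g t x Z = σ t Z / G t)
    (hcond : ∀ t ∈ Set.Icc 0 T, ∀ Z : ℝ,
      deriv (fun w => μ t w) Z
        - (μ t Z / σ t Z) * deriv (fun w => σ t w) Z
        - (1 / σ t Z) * deriv (fun s => σ s Z) t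
        - (σ t Z / 2) * deriv (fun w => deriv (fun w' => σ t w') w) Z
      = - deriv G t / G t) :
    ∀ t ∈ Set.Icc 0 T, ∀ x Z : ℝ,
      deriv (fun u => f t u Z) x
        + g t x Z * deriv (fun w => f t x w) Z
        - deriv (fun s => g s x Z) t
        - f t x Z * deriv (fun w => g t x w) Z = 0 :=
  compatibility_of_induced_system_general T μ σ F G f g hμ hσ hσne hG hGne hfdef hgdef hcond
end

section
/- Let σ : ℝ → ℝ be C² and nowhere zero, let c ∈ ℝ, and define μ : ℝ → ℝ by μ(X) = ((1/2)σ′(X) + c)·σ(X). Then μ and σ satisfy σ(X)·μ′(X) − μ(X)·σ′(X) − (σ(X)²/2)·σ″(X) = 0 for all X ∈ ℝ. Conversely, if μ : ℝ → ℝ is C¹ and satisfies σ·μ′ − μ·σ′ − (σ²/2)·σ″ = 0 everywhere, then there exists a constant c ∈ ℝ such that μ(X) = ((1/2)σ′(X) + c)·σ(X) for all X. -/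
/-! Since `σ ≠ 0`, the quotient rule gives
`(μ/σ − σ′/2)′ = (σ μ′ − μ σ′ − (σ²/2) σ″) / σ²`,
so the integration condition says precisely that `μ/σ − σ′/2` is constant on `ℝ`. -/

section

variable {σ μ : ℝ → ℝ} {X : ℝ}

theorem hasDerivAt_half_deriv_add_const_mul (hσ : DifferentiableAt ℝ σ X)
    (hσ' : DifferentiableAt ℝ (deriv σ) X) (c : ℝ) :
    HasDerivAt (fun Y => ((1/2) * deriv σ Y + c) * σ Y)
      ((1/2) * deriv (deriv σ) X * σ X + ((1/2) * deriv σ X + c) * deriv σ X) X :=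
  ((hσ'.hasDerivAt.const_mul (1/2)).add_const c).mul hσ.hasDerivAt

theorem hasDerivAt_div_sub_half_deriv (hμ : DifferentiableAt ℝ μ X)
    (hσ : DifferentiableAt ℝ σ X) (hσ' : DifferentiableAt ℝ (deriv σ) X) (hX : σ X ≠ 0) :
    HasDerivAt (fun Y => μ Y / σ Y - (1/2) * deriv σ Y)
      ((σ X * deriv μ X - μ X * deriv σ X - σ X ^ 2 / 2 * deriv (deriv σ) X) / σ X ^ 2) X := by
  refine ((hμ.hasDerivAt.div hσ.hasDerivAt hX).sub
    (hσ'.hasDerivAt.const_mul (1/2))).congr_deriv ?_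
  field_simp

end

/-- Autonomous integration condition: for `σ` of class C², nowhere zero, the drift
`μ(X) = (½σ′(X) + c)σ(X)` satisfies `σμ′ − μσ′ − (σ²/2)σ″ = 0`; conversely every C¹
drift satisfying this identity is of that form for some constant `c`. -/
theorem autonomous_integration_condition
    (σ : ℝ → ℝ) (hσ : ContDiff ℝ 2 σ) (hσne : ∀ X, σ X ≠ 0) :
    (∀ c : ℝ, ∀ X : ℝ,
      σ X * deriv (fun Y => ((1/2) * deriv σ Y + c) * σ Y) X
        - ((1/2) * deriv σ X + c) * σ X * deriv σ X
        - (σ X)^2 / 2 * deriv (deriv σ) X = 0)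
    ∧ ∀ μ : ℝ → ℝ, ContDiff ℝ 1 μ →
        (∀ X : ℝ,
          σ X * deriv μ X - μ X * deriv σ X - (σ X)^2 / 2 * deriv (deriv σ) X = 0) →
        ∃ c : ℝ, ∀ X : ℝ, μ X = ((1/2) * deriv σ X + c) * σ X := by
  have hσd : Differentiable ℝ σ := hσ.differentiable two_ne_zero
  have hσ'd : Differentiable ℝ (deriv σ) := hσ.differentiable_deriv_two
  refine ⟨fun c X => ?_, fun μ hμ hcond => ?_⟩
  · rw [(hasDerivAt_half_deriv_add_const_mul (hσd X) (hσ'd X) c).deriv]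
    ring
  · have hμd : Differentiable ℝ μ := hμ.differentiable one_ne_zero
    have hf' : ∀ Y, HasDerivAt (fun Y => μ Y / σ Y - (1/2) * deriv σ Y) 0 Y := fun Y => by
      simpa only [hcond Y, zero_div] using
        hasDerivAt_div_sub_half_deriv (hμd Y) (hσd Y) (hσ'd Y) (hσne Y)
    have hf_const : ∀ X, μ X / σ X - (1/2) * deriv σ X = μ 0 / σ 0 - (1/2) * deriv σ 0 :=
      fun X => is_const_of_deriv_eq_zero (fun Y => (hf' Y).differentiableAt)
        (fun Y => (hf' Y).deriv) X 0
    refine ⟨μ 0 / σ 0 - (1/2) * deriv σ 0, fun X => ?_⟩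
    rw [← hf_const X]
    field_simp [hσne X]
    ring
end
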